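/- arXiv:2301.05426 — 5 statements merged into one kernel-verified Lean document; each statement's English description precedes it below -/
import Mathlib

section
/- Let n₁,…,n_N be unit vectors in ℝ³. Define L = min_{n ∈ S²} (1/N)Σᵢ ‖n − nᵢ‖² and L̃ = (1/(2N²))Σ_{i,j} ‖nᵢ − nⱼ‖². Then L̃ = L − L²/4. -/
open scoped BigOperators

open RealInnerProductSpace in
/-- with `L` the minimum over unit vectors of the average squared distance
to the unit vectors `nᵢ`, and `L̃` half the average pairwise squared distance,
`L̃ = L − L²/4`. -/
theorem stmt_5 (N : ℕ) (hN : 0 < N) (v : Fin N → EuclideanSpace ℝ (Fin 3))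
    (hunit : ∀ i, ‖v i‖ = 1)
    (L : ℝ)
    (hL : IsLeast {x : ℝ | ∃ w : EuclideanSpace ℝ (Fin 3), ‖w‖ = 1 ∧
        x = (1 / (N : ℝ)) * ∑ i, ‖w - v i‖ ^ 2} L)
    (Lt : ℝ)
    (hLt : Lt = (1 / (2 * (N : ℝ) ^ 2)) * ∑ i, ∑ j, ‖v i - v j‖ ^ 2) :
    Lt = L - L ^ 2 / 4 := by
  set S : EuclideanSpace ℝ (Fin 3) := ∑ i, v i with hS
  have hNpos : (0:ℝ) < N := by exact_mod_cast hN
  -- value of each element of the set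
  have hval : ∀ w : EuclideanSpace ℝ (Fin 3), ‖w‖ = 1 →
      (1 / (N : ℝ)) * ∑ i, ‖w - v i‖ ^ 2 = 2 - (2 / N) * ⟪w, S⟫ := by
    intro w hw
    have hsum : ∑ i, ‖w - v i‖ ^ 2 = 2 * N - 2 * ⟪w, S⟫ := by
      have : ∀ i : Fin N, ‖w - v i‖ ^ 2 = 2 - 2 * ⟪w, v i⟫ := by
        intro i
        rw [norm_sub_sq_real, hw, hunit i]
        ring
      rw [Finset.sum_congr rfl (fun i _ => this i), hS, inner_sum]
      simp [Finset.sum_sub_distrib, Finset.mul_sum]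
      ring
    rw [hsum]; field_simp; try ring
  -- L = 2 - 2‖S‖/N
  have hLeq : L = 2 - 2 * ‖S‖ / N := by
    obtain ⟨⟨w, hw, hwL⟩, hlb⟩ := hL
    have hlow : 2 - 2 * ‖S‖ / N ≤ L := by
      rw [hwL, hval w hw]
      have : ⟪w, S⟫ ≤ ‖S‖ := by
        calc ⟪w, S⟫ ≤ ‖w‖ * ‖S‖ := real_inner_le_norm w S
        _ = ‖S‖ := by rw [hw, one_mul]
      have h2 : (2 / (N:ℝ)) * ⟪w, S⟫ ≤ 2 * ‖S‖ / N := by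
        rw [div_mul_eq_mul_div, mul_div_assoc, mul_div_assoc]
        gcongr
      linarith
    have hup : L ≤ 2 - 2 * ‖S‖ / N := by
      by_cases hS0 : S = 0
      · have hw1 : ‖(EuclideanSpace.single 0 1 : EuclideanSpace ℝ (Fin 3))‖ = 1 := by
          simp [EuclideanSpace.norm_single]
        have := hlb ⟨_, hw1, rfl⟩
        rw [hval _ hw1, hS0] at this
        simp only [hS0, norm_zero] at *
        simpa using this
      · set u : EuclideanSpace ℝ (Fin 3) := ‖S‖⁻¹ • S with hu
        have hSnorm : ‖S‖ ≠ 0 := by simpa using hS0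
        have hu1 : ‖u‖ = 1 := by
          rw [hu, norm_smul]
          simp [abs_of_nonneg (norm_nonneg S), inv_mul_cancel₀ hSnorm]
        have := hlb ⟨u, hu1, rfl⟩
        rw [hval u hu1] at this
        have hiu : ⟪u, S⟫ = ‖S‖ := by
          rw [hu, real_inner_smul_left, real_inner_self_eq_norm_sq]
          field_simp
        rw [hiu] at this
        calc L ≤ 2 - 2 / ↑N * ‖S‖ := this
        _ = 2 - 2 * ‖S‖ / N := by ring
    linarith
  -- Lt = 1 - ‖S‖²/N²
  have hLtEq : Lt = 1 - ‖S‖ ^ 2 / N ^ 2 := by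
    have hsum : ∑ i, ∑ j, ‖v i - v j‖ ^ 2 = 2 * N ^ 2 - 2 * ‖S‖ ^ 2 := by
      have h1 : ∀ i j : Fin N, ‖v i - v j‖ ^ 2 = 2 - 2 * ⟪v i, v j⟫ := by
        intro i j
        rw [norm_sub_sq_real, hunit i, hunit j]
        ring
      have h2 : ∑ i, ∑ j, ‖v i - v j‖ ^ 2
          = ∑ i : Fin N, ∑ j : Fin N, (2 - 2 * ⟪v i, v j⟫) := by
        exact Finset.sum_congr rfl fun i _ => Finset.sum_congr rfl fun j _ => h1 i j
      have h3 : ‖S‖ ^ 2 = ∑ i : Fin N, ∑ j : Fin N, ⟪v i, v j⟫ := by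
        rw [← real_inner_self_eq_norm_sq, hS, sum_inner]
        exact Finset.sum_congr rfl fun i _ => by rw [inner_sum]
      rw [h2, h3]
      simp [Finset.sum_sub_distrib, Finset.mul_sum]
      ring
    rw [hLt, hsum]
    field_simp
  rw [hLtEq, hLeq]
  field_simp
  ring
end

section
/- Let R̃ ∈ ℝ^{3×3} have singular value decomposition R̃ = UΣVᵀ with U,V ∈ O(3), Σ = diag(σ₁,σ₂,σ₃), σ₁ ≥ σ₂ ≥ σ₃ ≥ 0, and let ε = det(UVᵀ). Then max over R ∈ SO(3) of Tr(RᵀR̃) equals σ₁ + σ₂ + εσ₃, attained at R = U·diag(1,1,ε)·Vᵀ. -/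
open Matrix

set_option maxHeartbeats 2000000 in
lemma arith_bound (a b c p e f g h i d σ₁ σ₂ σ₃ : ℝ)
    (hr0 : a * a + b * b + c * c = 1)
    (hr1 : p * p + e * e + f * f = 1)
    (hr2 : g * g + h * h + i * i = 1)
    (hd2 : d ^ 2 = 1)
    (ha0 : e * i - f * h = d * a)
    (ha1 : a * i - c * g = d * e)
    (ha2 : a * e - b * p = d * i)
    (h12 : σ₂ ≤ σ₁) (h23 : σ₃ ≤ σ₂) (h3 : 0 ≤ σ₃) :
    σ₁ * a + σ₂ * e + σ₃ * i ≤ σ₁ + σ₂ + d * σ₃ := by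
  have ha : a ≤ 1 := by nlinarith [sq_nonneg (a - 1), sq_nonneg b, sq_nonneg c]
  have he : e ≤ 1 := by nlinarith [sq_nonneg (e - 1), sq_nonneg p, sq_nonneg f]
  have hi : i ≤ 1 := by nlinarith [sq_nonneg (i - 1), sq_nonneg g, sq_nonneg h]
  have ha' : -1 ≤ a := by nlinarith [sq_nonneg (a + 1), sq_nonneg b, sq_nonneg c]
  have he' : -1 ≤ e := by nlinarith [sq_nonneg (e + 1), sq_nonneg p, sq_nonneg f]
  have hi' : -1 ≤ i := by nlinarith [sq_nonneg (i + 1), sq_nonneg g, sq_nonneg h]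
  have htr2 : a^2 + e^2 + i^2 + 2*(b*p + c*g + f*h) ≤ 3 := by
    have hid2 : a^2 + e^2 + i^2 + 2*(b*p + c*g + f*h)
        + ((b - p)^2 + (c - g)^2 + (f - h)^2) = 3 := by
      linear_combination hr0 + hr1 + hr2
    linarith [sq_nonneg (b - p), sq_nonneg (c - g), sq_nonneg (f - h), hid2]
  have hdcases : d = 1 ∨ d = -1 := by
    have h0 : (d - 1) * (d + 1) = 0 := by linear_combination hd2
    rcases mul_eq_zero.mp h0 with h' | h'
    · left; linarith
    · right; linarith
  have htr : a + e + i ≤ 2 + d := by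
    rcases hdcases with rfl | rfl
    · linarith
    · have hid : (a + e + i)^2 + 2*(a + e + i)
          = a^2 + e^2 + i^2 + 2*(b*p + c*g + f*h) := by
        linear_combination (2:ℝ) * ha0 + 2 * ha1 + 2 * ha2
      nlinarith [htr2, hid]
  have p1 : (σ₁ - σ₂) * (1 - a) ≥ 0 := mul_nonneg (by linarith) (by linarith)
  have p2 : (σ₂ - σ₃) * (2 - a - e) ≥ 0 := mul_nonneg (by linarith) (by linarith)
  have p3 : σ₃ * ((2 + d) - (a + e + i)) ≥ 0 := mul_nonneg h3 (by linarith)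
  nlinarith [p1, p2, p3]

set_option maxHeartbeats 2000000 in
lemma key_bound (M : Matrix (Fin 3) (Fin 3) ℝ) (hM : M.transpose * M = 1)
    (σ₁ σ₂ σ₃ d : ℝ) (h12 : σ₂ ≤ σ₁) (h23 : σ₃ ≤ σ₂) (h3 : 0 ≤ σ₃)
    (hd : M.det = d) :
    σ₁ * M 0 0 + σ₂ * M 1 1 + σ₃ * M 2 2 ≤ σ₁ + σ₂ + d * σ₃ := by
  have hMM : M * M.transpose = 1 := mul_eq_one_comm.mp hM
  have hr0 := congrFun (congrFun hMM 0) 0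
  have hr1 := congrFun (congrFun hMM 1) 1
  have hr2 := congrFun (congrFun hMM 2) 2
  simp [Matrix.mul_apply, Fin.sum_univ_three, Matrix.one_apply] at hr0 hr1 hr2
  have hd2 : d ^ 2 = 1 := by
    have h1 := congrArg Matrix.det hM
    rw [Matrix.det_mul, Matrix.det_transpose, hd, Matrix.det_one] at h1
    nlinarith [h1]
  have hadj : M.adjugate = d • M.transpose := by
    calc M.adjugate = (M.transpose * M) * M.adjugate := by rw [hM, one_mul]
      _ = M.transpose * (M * M.adjugate) := by rw [Matrix.mul_assoc]
      _ = M.transpose * (d • (1 : Matrix (Fin 3) (Fin 3) ℝ)) := by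
          rw [Matrix.mul_adjugate, hd]
      _ = d • M.transpose := by rw [Matrix.mul_smul, Matrix.mul_one]
  have ha0 := congrFun (congrFun hadj 0) 0
  have ha1 := congrFun (congrFun hadj 1) 1
  have ha2 := congrFun (congrFun hadj 2) 2
  simp [Matrix.adjugate_fin_three, Matrix.smul_apply, Matrix.transpose_apply,
    smul_eq_mul] at ha0 ha1 ha2
  exact arith_bound (M 0 0) (M 0 1) (M 0 2) (M 1 0) (M 1 1) (M 1 2)
    (M 2 0) (M 2 1) (M 2 2) d σ₁ σ₂ σ₃ hr0 hr1 hr2 hd2 ha0 ha1 ha2 h12 h23 h3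

set_option maxHeartbeats 2000000 in
/-- Kabsch / constrained orthogonal Procrustes: with SVD
`R̃ = U Σ Vᵀ`, `σ₁ ≥ σ₂ ≥ σ₃ ≥ 0` and `ε = det(UVᵀ)`, the maximum of `Tr(Rᵀ R̃)`
over `R ∈ SO(3)` equals `σ₁ + σ₂ + ε σ₃`, attained at `R = U diag(1,1,ε) Vᵀ`. -/
theorem stmt_8
    (SO3 : Set (Matrix (Fin 3) (Fin 3) ℝ))
    (hSO3 : SO3 = {R | R.transpose * R = 1 ∧ R.det = 1})
    (Rt U V : Matrix (Fin 3) (Fin 3) ℝ)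
    (hU : U.transpose * U = 1) (hV : V.transpose * V = 1)
    (σ₁ σ₂ σ₃ : ℝ) (hσ : σ₁ ≥ σ₂ ∧ σ₂ ≥ σ₃ ∧ σ₃ ≥ 0)
    (hSVD : Rt = U * Matrix.diagonal ![σ₁, σ₂, σ₃] * V.transpose)
    (ε : ℝ) (hε : ε = (U * V.transpose).det) :
    IsGreatest {x : ℝ | ∃ Q ∈ SO3, x = (Q.transpose * Rt).trace} (σ₁ + σ₂ + ε * σ₃) ∧
    (U * Matrix.diagonal ![1, 1, ε] * V.transpose) ∈ SO3 ∧
    ((U * Matrix.diagonal ![1, 1, ε] * V.transpose).transpose * Rt).trace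
      = σ₁ + σ₂ + ε * σ₃ := by
  obtain ⟨h12, h23, h3⟩ := hσ
  have hUU : U * U.transpose = 1 := mul_eq_one_comm.mp hU
  have hVV : V * V.transpose = 1 := mul_eq_one_comm.mp hV
  have hεdet : ε = U.det * V.det := by
    rw [hε, Matrix.det_mul, Matrix.det_transpose]
  have hU2 : U.det * U.det = 1 := by
    have h1 := congrArg Matrix.det hU
    rwa [Matrix.det_mul, Matrix.det_transpose, Matrix.det_one] at h1
  have hV2 : V.det * V.det = 1 := by
    have h1 := congrArg Matrix.det hV
    rwa [Matrix.det_mul, Matrix.det_transpose, Matrix.det_one] at h1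
  have hε2 : ε * ε = 1 := by rw [hεdet]; nlinarith [hU2, hV2]
  set D : Matrix (Fin 3) (Fin 3) ℝ := Matrix.diagonal ![1, 1, ε] with hD
  set S : Matrix (Fin 3) (Fin 3) ℝ := Matrix.diagonal ![σ₁, σ₂, σ₃] with hS
  have hDD : D * D = 1 := by
    rw [hD, Matrix.diagonal_mul_diagonal]
    have : (fun i => ![1, 1, ε] i * ![1, 1, ε] i) = (1 : Fin 3 → ℝ) := by
      funext j; fin_cases j <;> simp [hε2]
    rw [this]; exact Matrix.diagonal_one
  have hDdet : D.det = ε := by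
    rw [hD, Matrix.det_diagonal, Fin.prod_univ_three]; simp
  -- membership of the candidate
  have hcand : (U * D * V.transpose) ∈ SO3 := by
    rw [hSO3]
    constructor
    · have ht : (U * D * V.transpose).transpose = V * D * U.transpose := by
        simp [Matrix.transpose_mul, Matrix.mul_assoc, hD, Matrix.diagonal_transpose]
      rw [ht]
      calc V * D * U.transpose * (U * D * V.transpose)
          = V * (D * ((U.transpose * U) * (D * V.transpose))) := by
            simp only [Matrix.mul_assoc]
        _ = V * ((D * D) * V.transpose) := by rw [hU]; simp only [Matrix.one_mul, Matrix.mul_assoc]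
        _ = V * V.transpose := by rw [hDD, Matrix.one_mul]
        _ = 1 := hVV
    · rw [Matrix.det_mul, Matrix.det_mul, hDdet, Matrix.det_transpose]
      rw [hεdet]; ring_nf; nlinarith [hU2, hV2]
  -- trace at the candidate
  have htrace : ((U * D * V.transpose).transpose * Rt).trace = σ₁ + σ₂ + ε * σ₃ := by
    have ht : (U * D * V.transpose).transpose = V * D * U.transpose := by
      simp [Matrix.transpose_mul, Matrix.mul_assoc, hD, Matrix.diagonal_transpose]
    rw [hSVD, ht]
    have hprod : V * D * U.transpose * (U * S * V.transpose)
        = V * (D * S * V.transpose) := by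
      calc V * D * U.transpose * (U * S * V.transpose)
          = V * (D * ((U.transpose * U) * (S * V.transpose))) := by
            simp only [Matrix.mul_assoc]
        _ = V * (D * S * V.transpose) := by rw [hU]; simp only [Matrix.one_mul, Matrix.mul_assoc]
    rw [hprod, Matrix.trace_mul_comm, Matrix.mul_assoc, Matrix.mul_assoc, hV,
      Matrix.mul_one]
    rw [hD, hS, Matrix.diagonal_mul_diagonal, Matrix.trace_diagonal, Fin.sum_univ_three]
    simp [mul_comm]
  refine ⟨⟨⟨U * D * V.transpose, hcand, htrace.symm⟩, ?_⟩, hcand, htrace⟩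
  rintro x ⟨Q, hQ, rfl⟩
  rw [hSO3] at hQ
  obtain ⟨hQ1, hQd⟩ := hQ
  have hQQ : Q * Q.transpose = 1 := mul_eq_one_comm.mp hQ1
  set M : Matrix (Fin 3) (Fin 3) ℝ := V.transpose * Q.transpose * U with hM
  have hMorth : M.transpose * M = 1 := by
    have ht : M.transpose = U.transpose * Q * V := by
      simp [hM, Matrix.transpose_mul, Matrix.mul_assoc]
    rw [ht, hM]
    calc U.transpose * Q * V * (V.transpose * Q.transpose * U)
        = U.transpose * (Q * ((V * V.transpose) * (Q.transpose * U))) := by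
          simp only [Matrix.mul_assoc]
      _ = U.transpose * ((Q * Q.transpose) * U) := by
          rw [hVV]; simp only [Matrix.one_mul, Matrix.mul_assoc]
      _ = U.transpose * U := by rw [hQQ, Matrix.one_mul]
      _ = 1 := hU
  have hMdet : M.det = ε := by
    rw [hM, Matrix.det_mul, Matrix.det_mul, Matrix.det_transpose, Matrix.det_transpose,
      hQd, hεdet]
    ring
  have htrQ : (Q.transpose * Rt).trace = σ₁ * M 0 0 + σ₂ * M 1 1 + σ₃ * M 2 2 := by
    rw [hSVD]
    have : Q.transpose * (U * S * V.transpose) = (Q.transpose * U * S) * V.transpose := by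
      simp only [Matrix.mul_assoc]
    rw [this, Matrix.trace_mul_comm]
    have : V.transpose * (Q.transpose * U * S) = M * S := by
      rw [hM]; simp only [Matrix.mul_assoc]
    rw [this, hS]
    simp [Matrix.trace, Matrix.diag, Matrix.mul_apply, Matrix.diagonal,
      Fin.sum_univ_three, mul_comm]
  rw [htrQ]
  exact key_bound M hMorth σ₁ σ₂ σ₃ ε h12 h23 h3 hMdet
end

section
/- A diagonal matrix diag(σ₁, σ₂, εσ₃) with σ₁ ≥ σ₂ ≥ σ₃ ≥ 0 and ε ∈ {+1,−1} lies in the convex hull of SO(3) if and only if σ₁ ≤ 1 and σ₁ + σ₂ − εσ₃ ≤ 1. -/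
private lemma so3_entry_bounds (R : Matrix (Fin 3) (Fin 3) ℝ)
    (hR : R.transpose * R = 1) (hd : R.det = 1) :
    R 0 0 ≤ 1 ∧ R 0 0 + R 1 1 - R 2 2 ≤ 1 := by
  have h := fun j k : Fin 3 => congrFun (congrFun hR j) k
  simp only [Matrix.mul_apply, Fin.sum_univ_three, Matrix.transpose_apply,
    Matrix.one_apply] at h
  have h1 := h 0 0; have h2 := h 1 1; have h3 := h 2 2
  have h4 := h 0 1; have h5 := h 0 2; have h6 := h 1 2
  norm_num [Fin.ext_iff] at h1 h2 h3 h4 h5 h6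
  rw [Matrix.det_fin_three] at hd
  set a := R 0 0; set b := R 0 1; set c := R 0 2
  set d := R 1 0; set e := R 1 1; set f := R 1 2
  set g := R 2 0; set h' := R 2 1; set i := R 2 2
  constructor
  · nlinarith [h1, sq_nonneg (a - 1), sq_nonneg d, sq_nonneg g]
  · have hE : a*e - b*d - a*i + c*g - e*i + f*h' + a + e - i = 0 := by
      linear_combination (e*i-f*h')*h1 + (a*i-c*g)*h2 + (-a*e+b*d)*h3 +
        (-d*i+f*g-b*i+c*h')*h4 + (d*h'-e*g-b*f+c*e)*h5 + (-a*h'+b*g+a*f-c*d)*h6 +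
        (-a-e+i)*hd
    nlinarith [sq_nonneg (1-a-e+i), sq_nonneg (f+h'), sq_nonneg (c+g),
      sq_nonneg (b-d), hE, h1, h2, h3]

/-- `diag(σ₁, σ₂, εσ₃)` with `σ₁ ≥ σ₂ ≥ σ₃ ≥ 0`, `ε = ±1`, lies in the
convex hull of SO(3) iff `σ₁ ≤ 1` and `σ₁ + σ₂ − εσ₃ ≤ 1`. -/
theorem stmt_11
    (SO3 : Set (Matrix (Fin 3) (Fin 3) ℝ))
    (hSO3 : SO3 = {R | R.transpose * R = 1 ∧ R.det = 1})
    (σ₁ σ₂ σ₃ ε : ℝ) (hσ : σ₁ ≥ σ₂ ∧ σ₂ ≥ σ₃ ∧ σ₃ ≥ 0) (hε : ε = 1 ∨ ε = -1) :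
    Matrix.diagonal ![σ₁, σ₂, ε * σ₃] ∈ convexHull ℝ SO3 ↔
      σ₁ ≤ 1 ∧ σ₁ + σ₂ - ε * σ₃ ≤ 1 := by
  obtain ⟨h12, h23, h30⟩ := hσ
  constructor
  · intro hmem
    have lin1 : IsLinearMap ℝ (fun M : Matrix (Fin 3) (Fin 3) ℝ => M 0 0) :=
      ⟨fun M N => rfl, fun c M => rfl⟩
    have lin2 : IsLinearMap ℝ (fun M : Matrix (Fin 3) (Fin 3) ℝ => M 0 0 + M 1 1 - M 2 2) := by
      constructor
      · intro M N; simp [Matrix.add_apply]; ring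
      · intro c M; simp [Matrix.smul_apply, smul_eq_mul]; ring
    have hsub1 : convexHull ℝ SO3 ⊆ {M | M 0 0 ≤ 1} := by
      apply convexHull_min _ (convex_halfSpace_le lin1 1)
      intro R hR
      rw [hSO3] at hR
      exact (so3_entry_bounds R hR.1 hR.2).1
    have hsub2 : convexHull ℝ SO3 ⊆ {M | M 0 0 + M 1 1 - M 2 2 ≤ 1} := by
      apply convexHull_min _ (convex_halfSpace_le lin2 1)
      intro R hR
      rw [hSO3] at hR
      exact (so3_entry_bounds R hR.1 hR.2).2
    have e1 := hsub1 hmem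
    have e2 := hsub2 hmem
    simp only [Set.mem_setOf_eq, Matrix.diagonal_apply_eq] at e1 e2
    simp only [Matrix.cons_val_zero, Matrix.cons_val_one, Matrix.head_cons,
      Matrix.cons_val_two, Matrix.tail_cons] at e1 e2
    exact ⟨e1, e2⟩
  · rintro ⟨hA, hB⟩
    set c := ε * σ₃ with hc
    -- the four diagonal rotations
    have hmemdiag : ∀ v : Fin 3 → ℝ, (∀ x, v x = 1 ∨ v x = -1) →
        v 0 * v 1 * v 2 = 1 → Matrix.diagonal v ∈ SO3 := by
      intro v hv hprod
      rw [hSO3]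
      constructor
      · have hvv : (fun i => v i * v i) = fun _ => (1:ℝ) := by
          funext x; rcases hv x with h | h <;> simp [h]
        rw [Matrix.diagonal_transpose, Matrix.diagonal_mul_diagonal, hvv]
        exact Matrix.diagonal_one
      · rw [Matrix.det_diagonal, Fin.prod_univ_three, hprod]
    have hR0 : Matrix.diagonal (![1,1,1] : Fin 3 → ℝ) ∈ SO3 := by
      apply hmemdiag <;> [skip; norm_num [Matrix.cons_val_two]]
      intro x; fin_cases x <;> norm_num
    have hR1 : Matrix.diagonal (![1,-1,-1] : Fin 3 → ℝ) ∈ SO3 := by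
      apply hmemdiag <;> [skip; norm_num [Matrix.cons_val_two]]
      intro x; fin_cases x <;> norm_num
    have hR2 : Matrix.diagonal (![-1,1,-1] : Fin 3 → ℝ) ∈ SO3 := by
      apply hmemdiag <;> [skip; norm_num [Matrix.cons_val_two]]
      intro x; fin_cases x <;> norm_num
    have hR3 : Matrix.diagonal (![-1,-1,1] : Fin 3 → ℝ) ∈ SO3 := by
      apply hmemdiag <;> [skip; norm_num [Matrix.cons_val_two]]
      intro x; fin_cases x <;> norm_num
    set l0 : ℝ := (1 + σ₁ + σ₂ + c)/4
    set l1 : ℝ := (1 + σ₁ - σ₂ - c)/4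
    set l2 : ℝ := (1 - σ₁ + σ₂ - c)/4
    set l3 : ℝ := (1 - σ₁ - σ₂ + c)/4
    have hεσ₃ : -σ₃ ≤ c ∧ c ≤ σ₃ := by
      rcases hε with h | h <;> rw [hc, h] <;> constructor <;> nlinarith
    obtain ⟨hcl, hcu⟩ := hεσ₃
    have hl0 : 0 ≤ l0 := by simp only [l0]; nlinarith
    have hl1 : 0 ≤ l1 := by simp only [l1]; nlinarith
    have hl2 : 0 ≤ l2 := by simp only [l2]; nlinarith
    have hl3 : 0 ≤ l3 := by simp only [l3]; nlinarith
    have hcomb : Matrix.diagonal ![σ₁, σ₂, c] =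
        l0 • Matrix.diagonal (![1,1,1] : Fin 3 → ℝ) +
        l1 • Matrix.diagonal (![1,-1,-1] : Fin 3 → ℝ) +
        l2 • Matrix.diagonal (![-1,1,-1] : Fin 3 → ℝ) +
        l3 • Matrix.diagonal (![-1,-1,1] : Fin 3 → ℝ) := by
      ext x y
      fin_cases x <;> fin_cases y <;>
        simp [Matrix.diagonal, Matrix.add_apply, Matrix.smul_apply, smul_eq_mul,
          l0, l1, l2, l3] <;> ring
    rw [hcomb]
    have hC := convex_convexHull ℝ SO3
    have m0 := subset_convexHull ℝ SO3 hR0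
    have m1 := subset_convexHull ℝ SO3 hR1
    have m2 := subset_convexHull ℝ SO3 hR2
    have m3 := subset_convexHull ℝ SO3 hR3
    have hsum : l0 + l1 + l2 + l3 = 1 := by simp only [l0, l1, l2, l3]; ring
    set w : Fin 4 → ℝ := ![l0, l1, l2, l3] with hw
    set P : Fin 4 → Matrix (Fin 3) (Fin 3) ℝ :=
      ![Matrix.diagonal (![1,1,1] : Fin 3 → ℝ), Matrix.diagonal (![1,-1,-1] : Fin 3 → ℝ),
        Matrix.diagonal (![-1,1,-1] : Fin 3 → ℝ), Matrix.diagonal (![-1,-1,1] : Fin 3 → ℝ)] with hP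
    have hmem : (∑ j : Fin 4, w j • P j) ∈ convexHull ℝ SO3 := by
      apply hC.sum_mem
      · intro j _
        fin_cases j
        · simpa [hw] using hl0
        · simpa [hw] using hl1
        · simpa [hw] using hl2
        · simpa [hw] using hl3
      · rw [Fin.sum_univ_four]; simp [hw]; linarith
      · intro j _; fin_cases j <;> simp [hP] <;> assumption
    rw [Fin.sum_univ_four] at hmem
    simpa [hw, hP] using hmem
end

section
/- The set {(a, b) : a = σ₁+σ₂+σ₃, b = σ₁²+σ₂²+σ₃², 1 ≥ σ₁ ≥ σ₂ ≥ σ₃ ≥ 0, σ₁+σ₂−σ₃ ≤ 1} equals {(a,b) : 0 ≤ a ≤ 1, a²/3 ≤ b ≤ a²} ∪ {(a,b) : 1 ≤ a ≤ 3, a²/3 ≤ b ≤ a²/2 − a + 3/2}. -/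
/-- the image of `(σ₁,σ₂,σ₃) ↦ (σ₁+σ₂+σ₃, σ₁²+σ₂²+σ₃²)` over the region
`1 ≥ σ₁ ≥ σ₂ ≥ σ₃ ≥ 0`, `σ₁+σ₂−σ₃ ≤ 1`. -/
theorem stmt_13 :
    {p : ℝ × ℝ | ∃ σ₁ σ₂ σ₃ : ℝ, 1 ≥ σ₁ ∧ σ₁ ≥ σ₂ ∧ σ₂ ≥ σ₃ ∧ σ₃ ≥ 0 ∧
        σ₁ + σ₂ - σ₃ ≤ 1 ∧ p.1 = σ₁ + σ₂ + σ₃ ∧ p.2 = σ₁ ^ 2 + σ₂ ^ 2 + σ₃ ^ 2}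
      = {p : ℝ × ℝ | 0 ≤ p.1 ∧ p.1 ≤ 1 ∧ p.1 ^ 2 / 3 ≤ p.2 ∧ p.2 ≤ p.1 ^ 2}
        ∪ {p : ℝ × ℝ | 1 ≤ p.1 ∧ p.1 ≤ 3 ∧ p.1 ^ 2 / 3 ≤ p.2 ∧
            p.2 ≤ p.1 ^ 2 / 2 - p.1 + 3 / 2} := by
  ext ⟨a, b⟩
  simp only [Set.mem_setOf_eq, Set.mem_union]
  constructor
  · rintro ⟨x, y, z, h1, hxy, hyz, hz, hc, ha, hb⟩
    subst ha hb
    have hlow : (x + y + z) ^ 2 / 3 ≤ x ^ 2 + y ^ 2 + z ^ 2 := by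
      nlinarith [sq_nonneg (x - y), sq_nonneg (y - z), sq_nonneg (x - z)]
    by_cases hcase : x + y + z ≤ 1
    · left
      refine ⟨by linarith, hcase, hlow, ?_⟩
      nlinarith [mul_nonneg (by linarith : (0:ℝ) ≤ x) (by linarith : (0:ℝ) ≤ y),
        mul_nonneg (by linarith : (0:ℝ) ≤ y) hz,
        mul_nonneg (by linarith : (0:ℝ) ≤ x) hz]
    · right
      refine ⟨by linarith, by linarith, hlow, ?_⟩
      nlinarith [mul_nonneg (by linarith : (0:ℝ) ≤ 1 - x) (by linarith : (0:ℝ) ≤ x - y),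
        mul_nonneg (by linarith : (0:ℝ) ≤ y - z) (by linarith : (0:ℝ) ≤ 1 - x - (y - z)),
        mul_nonneg (by linarith : (0:ℝ) ≤ 1 - x) (by linarith : (0:ℝ) ≤ y - z),
        sq_nonneg (1 - x)]
  · rintro (⟨ha0, ha1, hb1, hb2⟩ | ⟨ha1, ha3, hb1, hb2⟩) <;>
      have key : (0:ℝ) ≤ 6 * b - 2 * a ^ 2 := by linarith
    · -- a ∈ [0,1], a²/3 ≤ b ≤ a²
      set d := Real.sqrt (6 * b - 2 * a ^ 2) with hd
      have hd0 : 0 ≤ d := Real.sqrt_nonneg _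
      have hd2 : d ^ 2 = 6 * b - 2 * a ^ 2 := Real.sq_sqrt key
      have hdle : d ≤ 2 * a := by
        rw [hd, show 2 * a = Real.sqrt ((2 * a) ^ 2) from
          (Real.sqrt_sq (by linarith)).symm]
        exact Real.sqrt_le_sqrt (by nlinarith)
      refine ⟨(a + d) / 3, (2 * a - d) / 6, (2 * a - d) / 6, by linarith, by linarith,
        le_refl _, by linarith, by linarith, by ring, ?_⟩
      nlinarith [hd2]
    · -- a ∈ [1,3], a²/3 ≤ b ≤ a²/2 - a + 3/2
      set d := Real.sqrt (6 * b - 2 * a ^ 2) with hd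
      have hd0 : 0 ≤ d := Real.sqrt_nonneg _
      have hd2 : d ^ 2 = 6 * b - 2 * a ^ 2 := Real.sq_sqrt key
      have hdle : d ≤ 3 - a := by
        rw [hd, show 3 - a = Real.sqrt ((3 - a) ^ 2) from
          (Real.sqrt_sq (by linarith)).symm]
        exact Real.sqrt_le_sqrt (by nlinarith)
      have hdle2 : d ≤ 2 * a := by
        rw [hd, show 2 * a = Real.sqrt ((2 * a) ^ 2) from
          (Real.sqrt_sq (by linarith)).symm]
        exact Real.sqrt_le_sqrt (by nlinarith)
      refine ⟨(a + d) / 3, (2 * a - d) / 6, (2 * a - d) / 6, by linarith, by linarith,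
        le_refl _, by linarith, by linarith, by ring, ?_⟩
      nlinarith [hd2]
end

section
/- The set {(a, b) : a = σ₁+σ₂−σ₃, b = σ₁²+σ₂²+σ₃², 1 ≥ σ₁ ≥ σ₂ ≥ σ₃ ≥ 0, σ₁+σ₂+σ₃ ≤ 1} equals {(a,b) : 0 ≤ a ≤ 1/3, a²/2 ≤ b ≤ 3a²} ∪ {(a,b) : 1/3 ≤ a ≤ 1, a²/2 ≤ b ≤ (3/2)a² − a + 1/2}. -/
/-- the image of `(σ₁,σ₂,σ₃) ↦ (σ₁+σ₂−σ₃, σ₁²+σ₂²+σ₃²)` over the region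
`1 ≥ σ₁ ≥ σ₂ ≥ σ₃ ≥ 0`, `σ₁+σ₂+σ₃ ≤ 1`. -/
theorem stmt_14 :
    {p : ℝ × ℝ | ∃ σ₁ σ₂ σ₃ : ℝ, 1 ≥ σ₁ ∧ σ₁ ≥ σ₂ ∧ σ₂ ≥ σ₃ ∧ σ₃ ≥ 0 ∧
        σ₁ + σ₂ + σ₃ ≤ 1 ∧ p.1 = σ₁ + σ₂ - σ₃ ∧ p.2 = σ₁ ^ 2 + σ₂ ^ 2 + σ₃ ^ 2}
      = {p : ℝ × ℝ | 0 ≤ p.1 ∧ p.1 ≤ 1 / 3 ∧ p.1 ^ 2 / 2 ≤ p.2 ∧ p.2 ≤ 3 * p.1 ^ 2}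
        ∪ {p : ℝ × ℝ | 1 / 3 ≤ p.1 ∧ p.1 ≤ 1 ∧ p.1 ^ 2 / 2 ≤ p.2 ∧
            p.2 ≤ 3 / 2 * p.1 ^ 2 - p.1 + 1 / 2} := by
  ext ⟨a, b⟩
  simp only [Set.mem_setOf_eq, Set.mem_union]
  constructor
  · rintro ⟨x, y, z, h1, h2, h3, h4, h5, ha, hb⟩
    have hz2 : (0:ℝ) ≤ y := le_trans h4 h3
    have hlow : a ^ 2 / 2 ≤ b := by
      nlinarith [sq_nonneg (x - y + z), mul_nonneg hz2 h4]
    by_cases hc : a ≤ 1 / 3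
    · left
      refine ⟨by linarith, hc, hlow, ?_⟩
      nlinarith [mul_nonneg (by linarith : (0:ℝ) ≤ y - z) (by linarith : (0:ℝ) ≤ 3*x + 2*y - z),
        mul_nonneg (by linarith : (0:ℝ) ≤ x - y) (by linarith : (0:ℝ) ≤ x + y)]
    · right
      refine ⟨by linarith, by linarith, hlow, ?_⟩
      nlinarith [mul_nonneg (by linarith : (0:ℝ) ≤ y - z) (by linarith : (0:ℝ) ≤ 1 - x - y - z),
        mul_nonneg (by linarith : (0:ℝ) ≤ x - y) (by linarith : (0:ℝ) ≤ 1 - x - y - z),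
        mul_nonneg h4 (by linarith : (0:ℝ) ≤ 1 - x - y - z),
        sq_nonneg (1 - x - y - z), mul_nonneg (by linarith : (0:ℝ) ≤ y - z) (by linarith : (0:ℝ) ≤ x - y),
        sq_nonneg (y - z), mul_nonneg h4 (by linarith : (0:ℝ) ≤ y - z)]
  · rintro (⟨h0, h13, hlo, hhi⟩ | ⟨h13, h1, hlo, hhi⟩)
    · -- region 1: σ₁ = σ₂ = (2a+r)/6, σ₃ = (r-a)/3, r = √(6b-2a²)
      set r := Real.sqrt (6*b - 2*a^2) with hr
      have hr0 : 0 ≤ r := Real.sqrt_nonneg _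
      have hrsq : r ^ 2 = 6*b - 2*a^2 := Real.sq_sqrt (by nlinarith)
      have hra : a ≤ r := by nlinarith [sq_nonneg (r - a), sq_nonneg (r + a)]
      have hr4 : r ≤ 4*a := by
        have := Real.sqrt_le_sqrt (show 6*b - 2*a^2 ≤ (4*a)^2 by nlinarith)
        rwa [Real.sqrt_sq (by linarith)] at this
      refine ⟨(2*a+r)/6, (2*a+r)/6, (r-a)/3, by linarith, le_refl _, by linarith, by linarith,
        by linarith, by ring, ?_⟩
      linear_combination (-1/6 : ℝ) * hrsq
    · by_cases hba : b ≤ a ^ 2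
      · -- σ₁ = (a+d)/2, σ₂ = (a-d)/2, σ₃ = 0, d = √(2b-a²)
        set d := Real.sqrt (2*b - a^2) with hd
        have hd0 : 0 ≤ d := Real.sqrt_nonneg _
        have hdsq : d ^ 2 = 2*b - a^2 := Real.sq_sqrt (by nlinarith)
        have hda : d ≤ a := by
          have := Real.sqrt_le_sqrt (show 2*b - a^2 ≤ a^2 by nlinarith)
          rwa [show a^2 = a^2 from rfl, Real.sqrt_sq (by linarith)] at this
        refine ⟨(a+d)/2, (a-d)/2, 0, by linarith, by linarith, by linarith, le_refl _,
          by linarith, by ring, ?_⟩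
        linear_combination (-1/2 : ℝ) * hdsq
      · -- σ₁ = a, σ₂ = σ₃ = √((b-a²)/2)
        set e := Real.sqrt ((b - a^2)/2) with he
        have he0 : 0 ≤ e := Real.sqrt_nonneg _
        have hesq : e ^ 2 = (b - a^2)/2 := Real.sq_sqrt (by nlinarith)
        have hea : e ≤ a := by
          have := Real.sqrt_le_sqrt (show (b - a^2)/2 ≤ a^2 by nlinarith)
          rwa [Real.sqrt_sq (by linarith)] at this
        have hes : e ≤ (1-a)/2 := by
          have := Real.sqrt_le_sqrt (show (b - a^2)/2 ≤ ((1-a)/2)^2 by nlinarith)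
          rwa [Real.sqrt_sq (by linarith)] at this
        refine ⟨a, e, e, by linarith, hea, le_refl _, he0, by linarith, by ring, ?_⟩
        linear_combination (-2 : ℝ) * hesq
end
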